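/- arXiv:2403.02521 — 5 statements merged into one kernel-verified Lean document; each statement's English description precedes it below -/
import Mathlib

section
/- Let U ⊆ ℂ be a nonempty connected open set and let E ⊆ U be relatively closed in U with U \ E nonempty. Suppose every bounded holomorphic function on U \ E admits a holomorphic extension to U. Then for every bounded holomorphic f on U \ E: (i) any two holomorphic functions on U extending f coincide on U; and (ii) every holomorphic extension F of f to U satisfies sup_{z ∈ U} |F(z)| = sup_{z ∈ U \ E} |f(z)| (in particular F is bounded). -/
/-!
Holomorphic extensions are unique by the identity theorem, since `U \ E` is a nonempty open
subset of the connected set `U`. For the norm, let `M` be the supremum of `|f|` on `U \ E` and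
suppose an extension `F` took a value `c` with `|c| > M` somewhere in `U`. Then `1 / (F - c)` is
bounded holomorphic on `U \ E`, so it has a holomorphic extension `G` to `U`, and
`G (F - c) = 1` on `U \ E`, hence on all of `U`: impossible where `F = c`.
-/

open Complex Set

/-- `f` is bounded holomorphic on the open set `Ω`. -/
def BddHolo (f : ℂ → ℂ) (Ω : Set ℂ) : Prop :=
  DifferentiableOn ℂ f Ω ∧ ∃ M : ℝ, ∀ z ∈ Ω, ‖f z‖ ≤ M

theorem DifferentiableOn.eqOn_of_eqOn_isOpen {E : Type*} [NormedAddCommGroup E]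
    [NormedSpace ℂ E] [CompleteSpace E] {U V : Set ℂ} {F G : ℂ → E}
    (hF : DifferentiableOn ℂ F U) (hG : DifferentiableOn ℂ G U) (hU : IsOpen U)
    (hUc : IsPreconnected U) (hV : IsOpen V) (hVU : V ⊆ U) (hVne : V.Nonempty)
    (h : EqOn F G V) : EqOn F G U := by
  obtain ⟨z₀, hz₀⟩ := hVne
  exact (hF.analyticOnNhd hU).eqOn_of_preconnected_of_eventuallyEq (hG.analyticOnNhd hU) hUc
    (hVU hz₀) (Filter.eventuallyEq_of_mem (hV.mem_nhds hz₀) h)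

theorem bddHolo_inv_sub_const {F : ℂ → ℂ} {V : Set ℂ} {M : ℝ} {c : ℂ}
    (hF : DifferentiableOn ℂ F V) (hFM : ∀ z ∈ V, ‖F z‖ ≤ M) (hc : M < ‖c‖) :
    BddHolo (fun z => (F z - c)⁻¹) V := by
  have hdist : ∀ z ∈ V, ‖c‖ - M ≤ ‖F z - c‖ := fun z hz =>
    calc ‖c‖ - M ≤ ‖c‖ - ‖F z‖ := by linarith [hFM z hz]
      _ ≤ ‖F z - c‖ := by rw [norm_sub_rev]; exact norm_sub_norm_le c (F z)
  have hne : ∀ z ∈ V, F z - c ≠ 0 := fun z hz =>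
    norm_pos_iff.1 ((sub_pos.2 hc).trans_le (hdist z hz))
  refine ⟨(hF.sub_const c).inv hne, (‖c‖ - M)⁻¹, fun z hz => ?_⟩
  rw [norm_inv]
  exact inv_anti₀ (sub_pos.2 hc) (hdist z hz)

theorem norm_le_of_forall_bddHolo_extends {U V : Set ℂ} (hU : IsOpen U) (hUc : IsPreconnected U)
    (hV : IsOpen V) (hVU : V ⊆ U) (hVne : V.Nonempty)
    (hext : ∀ g : ℂ → ℂ, BddHolo g V →
      ∃ G : ℂ → ℂ, DifferentiableOn ℂ G U ∧ ∀ z ∈ V, G z = g z)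
    {F : ℂ → ℂ} (hF : DifferentiableOn ℂ F U) {M : ℝ} (hFM : ∀ z ∈ V, ‖F z‖ ≤ M) :
    ∀ z ∈ U, ‖F z‖ ≤ M := by
  intro z₀ hz₀
  by_contra! hc
  obtain ⟨G, hG, hGg⟩ := hext _ (bddHolo_inv_sub_const (hF.mono hVU) hFM hc)
  have hGF : EqOn (fun z => G z * (F z - F z₀)) 1 U := by
    refine (hG.mul (hF.sub_const _)).eqOn_of_eqOn_isOpen (differentiableOn_const 1) hU hUc hV hVU
      hVne fun z hz => ?_
    have hne : F z ≠ F z₀ := fun h => (hFM z hz).not_gt (h ▸ hc)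
    change G z * (F z - F z₀) = 1
    rw [hGg z hz]
    exact inv_mul_cancel₀ (sub_ne_zero.2 hne)
  simpa using hGF hz₀

theorem csSup_image_eq_of_le_csSup {α : Type*} {g : α → ℝ} {S T : Set α} (hST : S ⊆ T)
    (hS : S.Nonempty) (hT : ∀ x ∈ T, g x ≤ sSup (g '' S)) :
    sSup (g '' T) = sSup (g '' S) :=
  le_antisymm (csSup_le ((hS.mono hST).image g) (forall_mem_image.2 hT))
    (csSup_le_csSup ⟨_, forall_mem_image.2 hT⟩ (hS.image g) (image_mono hST))

theorem stmt_1_general (U E : Set ℂ) (hUopen : IsOpen U)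
    (hUconn : IsConnected U) (hrelclosed : IsOpen (U \ E))
    (hne : (U \ E).Nonempty)
    (hext : ∀ f : ℂ → ℂ, BddHolo f (U \ E) →
      ∃ F : ℂ → ℂ, DifferentiableOn ℂ F U ∧ ∀ z ∈ U \ E, F z = f z) :
    ∀ f : ℂ → ℂ, BddHolo f (U \ E) →
      -- (i) uniqueness of holomorphic extensions
      (∀ F G : ℂ → ℂ, DifferentiableOn ℂ F U → (∀ z ∈ U \ E, F z = f z) →
        DifferentiableOn ℂ G U → (∀ z ∈ U \ E, G z = f z) → Set.EqOn F G U) ∧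
      -- (ii) every holomorphic extension is bounded and norm preserving
      (∀ F : ℂ → ℂ, DifferentiableOn ℂ F U → (∀ z ∈ U \ E, F z = f z) →
        (∃ M : ℝ, ∀ z ∈ U, ‖F z‖ ≤ M) ∧
        sSup ((fun z => ‖F z‖) '' U)
          = sSup ((fun z => ‖f z‖) '' (U \ E))) := by
  rintro f ⟨-, M₀, hfM₀⟩
  have hUc := hUconn.isPreconnected
  refine ⟨fun F G hF hFf hG hGf => hF.eqOn_of_eqOn_isOpen hG hUopen hUc hrelclosed sdiff_subset hne
    fun z hz => (hFf z hz).trans (hGf z hz).symm, fun F hF hFf => ?_⟩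
  have hFf' : (fun z => ‖F z‖) '' (U \ E) = (fun z => ‖f z‖) '' (U \ E) :=
    image_congr fun z hz => by rw [hFf z hz]
  have hbdd : BddAbove ((fun z => ‖f z‖) '' (U \ E)) := ⟨M₀, forall_mem_image.2 hfM₀⟩
  have hFM : ∀ z ∈ U \ E, ‖F z‖ ≤ sSup ((fun z => ‖f z‖) '' (U \ E)) := fun z hz => by
    rw [hFf z hz]
    exact le_csSup hbdd (mem_image_of_mem _ hz)
  have hFU := norm_le_of_forall_bddHolo_extends hUopen hUc hrelclosed sdiff_subset hne hext hF hFM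
  refine ⟨⟨_, hFU⟩, ?_⟩
  rw [← hFf'] at hFU ⊢
  exact csSup_image_eq_of_le_csSup sdiff_subset hne hFU

theorem stmt_1 (U E : Set ℂ) (hUopen : IsOpen U) (hUne : U.Nonempty)
    (hUconn : IsConnected U) (hEU : E ⊆ U) (hrelclosed : IsOpen (U \ E))
    (hne : (U \ E).Nonempty)
    (hext : ∀ f : ℂ → ℂ, BddHolo f (U \ E) →
      ∃ F : ℂ → ℂ, DifferentiableOn ℂ F U ∧ ∀ z ∈ U \ E, F z = f z) :
    ∀ f : ℂ → ℂ, BddHolo f (U \ E) →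
      -- (i) uniqueness of holomorphic extensions
      (∀ F G : ℂ → ℂ, DifferentiableOn ℂ F U → (∀ z ∈ U \ E, F z = f z) →
        DifferentiableOn ℂ G U → (∀ z ∈ U \ E, G z = f z) → Set.EqOn F G U) ∧
      -- (ii) every holomorphic extension is bounded and norm preserving
      (∀ F : ℂ → ℂ, DifferentiableOn ℂ F U → (∀ z ∈ U \ E, F z = f z) →
        (∃ M : ℝ, ∀ z ∈ U, ‖F z‖ ≤ M) ∧
        sSup ((fun z => ‖F z‖) '' U)
          = sSup ((fun z => ‖f z‖) '' (U \ E))) :=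
  stmt_1_general U E hUopen hUconn hrelclosed hne hext
end

section
/- Let 𝔻 = {z ∈ ℂ : |z| < 1} and let E ⊆ 𝔻 be relatively closed in 𝔻 with 𝔻 \ E nonempty. If every bounded holomorphic function on 𝔻 \ E admits a holomorphic extension to 𝔻, then 𝔻 \ E is connected. -/
/-! If `Ω` splits into two relatively open pieces, the function equal to `1` on one piece and `0`
on the other is bounded and holomorphic on `Ω`. Its holomorphic extension `F` to `𝔻` agrees with
the constant `1` near a point of the first piece, so by the identity theorem `F ≡ 1` on the
connected set `𝔻`, contradicting `F = 0` on the second piece. -/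

open Complex Set Metric

open Filter Topology

lemma ContinuousOn.eventuallyEq_const_of_discrete {X Y : Type*} [TopologicalSpace X]
    [TopologicalSpace Y] [DiscreteTopology Y] {f : X → Y} {s : Set X} {x : X}
    (hf : ContinuousOn f s) (hs : IsOpen s) (hx : x ∈ s) :
    f =ᶠ[𝓝 x] fun _ => f x :=
  (hf.continuousAt (hs.mem_nhds hx)).eventually_mem ((isOpen_discrete {f x}).mem_nhds rfl)

lemma DifferentiableOn.eq_of_eventuallyEq_const {F : ℂ → ℂ} {D : Set ℂ} {x y : ℂ} {c : ℂ}
    (hF : DifferentiableOn ℂ F D) (hDo : IsOpen D) (hD : IsPreconnected D)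
    (hx : x ∈ D) (hy : y ∈ D) (hFx : F =ᶠ[𝓝 x] fun _ => c) : F y = c :=
  (hF.analyticOnNhd hDo).eqOn_of_preconnected_of_eventuallyEq analyticOnNhd_const hD hx hFx hy

theorem IsOpen.isPreconnected_of_forall_bddHolo_extend {Ω D : Set ℂ} (hΩ : IsOpen Ω)
    (hΩD : Ω ⊆ D) (hDo : IsOpen D) (hD : IsPreconnected D)
    (hext : ∀ f : ℂ → ℂ, BddHolo f Ω →
      ∃ F : ℂ → ℂ, DifferentiableOn ℂ F D ∧ ∀ z ∈ Ω, F z = f z) :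
    IsPreconnected Ω := by
  refine isPreconnected_of_forall_constant fun g hg x hx y hy => ?_
  set f : ℂ → ℂ := fun z => cond (g z) 1 0
  have hf_loc : ∀ z ∈ Ω, f =ᶠ[𝓝 z] fun _ => f z := fun z hz =>
    (hg.eventuallyEq_const_of_discrete hΩ hz).fun_comp fun b => cond b (1 : ℂ) 0
  have hf_bdd : BddHolo f Ω := by
    refine ⟨fun z hz => ((hf_loc z hz).differentiableAt_iff.mpr
      (differentiableAt_const _)).differentiableWithinAt, 1, fun z _ => ?_⟩
    dsimp only [f]
    cases g z <;> simp
  obtain ⟨F, hFD, hFf⟩ := hext f hf_bdd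
  have hFx : F =ᶠ[𝓝 x] fun _ => f x :=
    EventuallyEq.trans (eventually_of_mem (hΩ.mem_nhds hx) hFf) (hf_loc x hx)
  have hfxy : f x = f y :=
    (hFD.eq_of_eventuallyEq_const hDo hD (hΩD hx) (hΩD hy) hFx).symm.trans (hFf y hy)
  have cond_injective : ∀ a b : Bool, cond a (1 : ℂ) 0 = cond b 1 0 → a = b := by
    intro a b; cases a <;> cases b <;> simp
  exact cond_injective _ _ hfxy

theorem stmt_2_general (E : Set ℂ)
    (hrelclosed : IsOpen (ball (0 : ℂ) 1 \ E))
    (hne : (ball (0 : ℂ) 1 \ E).Nonempty)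
    (hext : ∀ f : ℂ → ℂ, BddHolo f (ball (0 : ℂ) 1 \ E) →
      ∃ F : ℂ → ℂ, DifferentiableOn ℂ F (ball (0 : ℂ) 1) ∧
        ∀ z ∈ ball (0 : ℂ) 1 \ E, F z = f z) :
    IsConnected (ball (0 : ℂ) 1 \ E) :=
  ⟨hne, hrelclosed.isPreconnected_of_forall_bddHolo_extend sdiff_subset isOpen_ball
    (convex_ball 0 1).isPreconnected hext⟩

theorem stmt_2 (E : Set ℂ) (hE : E ⊆ ball (0 : ℂ) 1)
    (hrelclosed : IsOpen (ball (0 : ℂ) 1 \ E))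
    (hne : (ball (0 : ℂ) 1 \ E).Nonempty)
    (hext : ∀ f : ℂ → ℂ, BddHolo f (ball (0 : ℂ) 1 \ E) →
      ∃ F : ℂ → ℂ, DifferentiableOn ℂ F (ball (0 : ℂ) 1) ∧
        ∀ z ∈ ball (0 : ℂ) 1 \ E, F z = f z) :
    IsConnected (ball (0 : ℂ) 1 \ E) :=
  stmt_2_general E hrelclosed hne hext
end

section
/- Let A ⊆ 𝔻 be a dominating set, i.e., for every bounded holomorphic function Φ on 𝔻 one has sup_{a ∈ A} |Φ(a)| = sup_{z ∈ 𝔻} |Φ(z)|. Then the family (1 − |a|)_{a ∈ A} is not summable; i.e., the Blaschke condition fails: ∑_{a ∈ A} (1 − |a|) = ∞. -/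
/-!
If `∑ (1 - |a|) < ∞`, the Blaschke product `B = ∏_{a ∈ A} (|a|/a)(a - z)/(1 - ā z)` converges
locally uniformly on `𝔻`, since each factor differs from `1` by `O((1 - |a|)/(1 - |z|))`. So `B` is
holomorphic, bounded by `1`, vanishes on `A` and nowhere else. The summability also forces `A` to
be countable, so `B` is not identically zero, while `sup_A |B| = 0`: `A` is not dominating.
-/

open Complex Set Metric

open ComplexConjugate Filter

/-- The unimodular constant `|a| / a` makes the factor positive at `0`, so that it tends to `1` as
`|a| → 1`; `a = 0` is treated separately since `‖a‖ / a` is the junk value `0` there. -/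
noncomputable def blaschkeFactor (a z : ℂ) : ℂ :=
  if a = 0 then z else (‖a‖ / a : ℂ) * ((a - z) / (1 - conj a * z))

section BlaschkeFactor

variable {a z : ℂ}

lemma one_sub_norm_le_norm_one_sub_conj_mul (ha : ‖a‖ ≤ 1) : 1 - ‖z‖ ≤ ‖1 - conj a * z‖ :=
  calc 1 - ‖z‖ ≤ ‖(1 : ℂ)‖ - ‖conj a * z‖ := by
        rw [norm_one, norm_mul, norm_conj]
        gcongr
        exact mul_le_of_le_one_left (norm_nonneg z) ha
    _ ≤ ‖1 - conj a * z‖ := norm_sub_norm_le _ _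

lemma one_sub_conj_mul_ne_zero (ha : ‖a‖ ≤ 1) (hz : ‖z‖ < 1) : 1 - conj a * z ≠ 0 :=
  norm_pos_iff.mp ((sub_pos.mpr hz).trans_le (one_sub_norm_le_norm_one_sub_conj_mul ha))

lemma norm_sub_le_norm_one_sub_conj_mul (ha : ‖a‖ ≤ 1) (hz : ‖z‖ ≤ 1) :
    ‖a - z‖ ≤ ‖1 - conj a * z‖ := by
  have key : normSq (1 - conj a * z) - normSq (a - z) = (1 - normSq a) * (1 - normSq z) := by
    simp only [normSq_apply, sub_re, sub_im, mul_re, mul_im, one_re, one_im, conj_re, conj_im]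
    ring
  have ha' : normSq a ≤ 1 := by rw [← Complex.sq_norm]; exact pow_le_one₀ (norm_nonneg a) ha
  have hz' : normSq z ≤ 1 := by rw [← Complex.sq_norm]; exact pow_le_one₀ (norm_nonneg z) hz
  rw [← sq_le_sq₀ (norm_nonneg _) (norm_nonneg _), Complex.sq_norm, Complex.sq_norm]
  nlinarith [mul_nonneg (sub_nonneg.mpr ha') (sub_nonneg.mpr hz')]

lemma blaschkeFactor_eq_zero_iff (ha : ‖a‖ < 1) (hz : ‖z‖ < 1) :
    blaschkeFactor a z = 0 ↔ z = a := by
  unfold blaschkeFactor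
  split_ifs with ha0
  · rw [ha0]
  · simp only [mul_eq_zero, div_eq_zero_iff, ofReal_eq_zero, norm_eq_zero, ha0,
      one_sub_conj_mul_ne_zero ha.le hz, sub_eq_zero, false_or, or_false]
    exact eq_comm

lemma norm_blaschkeFactor_le_one (ha : ‖a‖ < 1) (hz : ‖z‖ < 1) : ‖blaschkeFactor a z‖ ≤ 1 := by
  unfold blaschkeFactor
  split_ifs with ha0
  · exact hz.le
  · rw [norm_mul, norm_div, norm_real, norm_norm, div_self (norm_ne_zero_iff.mpr ha0), one_mul,
      norm_div, div_le_one (norm_pos_iff.mpr (one_sub_conj_mul_ne_zero ha.le hz))]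
    exact norm_sub_le_norm_one_sub_conj_mul ha.le hz.le

lemma blaschkeFactor_sub_one (ha0 : a ≠ 0) (hz : 1 - conj a * z ≠ 0) :
    blaschkeFactor a z - 1 = (‖a‖ - 1) * (a + ‖a‖ * z) / (a * (1 - conj a * z)) := by
  have hnorm : conj a * a = (‖a‖ : ℂ) ^ 2 := by
    rw [mul_comm, mul_conj, normSq_eq_norm_sq]; push_cast; ring
  have hz' : 1 - z * conj a ≠ 0 := by rwa [mul_comm]
  rw [blaschkeFactor, if_neg ha0]
  field_simp
  linear_combination z * hnorm

lemma norm_blaschkeFactor_sub_one_le (ha : ‖a‖ < 1) (hz : ‖z‖ < 1) :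
    ‖blaschkeFactor a z - 1‖ ≤ (1 + ‖z‖) / (1 - ‖z‖) * (1 - ‖a‖) := by
  have hz' : 0 < 1 - ‖z‖ := sub_pos.mpr hz
  by_cases ha0 : a = 0
  · simp only [blaschkeFactor, ha0, if_true, norm_zero, sub_zero, mul_one]
    rw [le_div_iff₀ hz']
    nlinarith [norm_sub_le z 1, norm_one (α := ℂ), norm_nonneg z]
  have hden := one_sub_conj_mul_ne_zero ha.le hz
  have hnum : ‖a + ‖a‖ * z‖ ≤ ‖a‖ * (1 + ‖z‖) := by
    calc ‖a + ‖a‖ * z‖ ≤ ‖a‖ + ‖(‖a‖ : ℂ)‖ * ‖z‖ := (norm_add_le _ _).trans_eq (by rw [norm_mul])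
      _ = ‖a‖ * (1 + ‖z‖) := by rw [norm_real, norm_norm]; ring
  rw [blaschkeFactor_sub_one ha0 hden, norm_div, norm_mul, norm_mul,
    show ‖(‖a‖ : ℂ) - 1‖ = 1 - ‖a‖ by
      rw [← ofReal_one, ← ofReal_sub, norm_real, Real.norm_of_nonpos (by linarith), neg_sub],
    div_le_iff₀ (by positivity)]
  calc (1 - ‖a‖) * ‖a + ‖a‖ * z‖ ≤ (1 - ‖a‖) * (‖a‖ * (1 + ‖z‖)) := by gcongr
    _ = (1 + ‖z‖) / (1 - ‖z‖) * (1 - ‖a‖) * (‖a‖ * (1 - ‖z‖)) := by field_simp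
    _ ≤ (1 + ‖z‖) / (1 - ‖z‖) * (1 - ‖a‖) * (‖a‖ * ‖1 - conj a * z‖) := by
        have ha' := sub_nonneg.mpr ha.le
        gcongr
        exact one_sub_norm_le_norm_one_sub_conj_mul ha.le

lemma differentiableOn_blaschkeFactor (ha : ‖a‖ < 1) :
    DifferentiableOn ℂ (blaschkeFactor a) (ball 0 1) := by
  unfold blaschkeFactor
  split_ifs
  · exact differentiableOn_id
  · refine (differentiableOn_const _).mul (((differentiableOn_const _).sub differentiableOn_id).div
      ((differentiableOn_const _).sub ((differentiableOn_const _).mul differentiableOn_id)) ?_)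
    intro z hz
    exact one_sub_conj_mul_ne_zero ha.le (mem_ball_zero_iff.mp hz)

end BlaschkeFactor

lemma norm_tprod_le_one {ι 𝕜 : Type*} [NormedField 𝕜] {f : ι → 𝕜} (hf : ∀ i, ‖f i‖ ≤ 1) :
    ‖∏' i, f i‖ ≤ 1 := by
  by_cases hm : Multipliable f
  · refine le_of_tendsto' ((continuous_norm.tendsto _).comp hm.hasProd) fun s ↦ ?_
    rw [Function.comp_apply, norm_prod]
    exact Finset.prod_le_one (fun i _ ↦ norm_nonneg _) fun i _ ↦ hf i
  · rw [tprod_eq_one_of_not_multipliable hm, norm_one]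

noncomputable def blaschkeProduct (A : Set ℂ) (z : ℂ) : ℂ :=
  ∏' a : A, blaschkeFactor a z

section BlaschkeProduct

variable {A : Set ℂ} {z : ℂ}

lemma blaschkeProduct_eq_zero_of_mem (hA : A ⊆ ball 0 1) (hz : z ∈ A) :
    blaschkeProduct A z = 0 :=
  tprod_of_exists_eq_zero ⟨⟨z, hz⟩, (blaschkeFactor_eq_zero_iff (mem_ball_zero_iff.mp (hA hz))
    (mem_ball_zero_iff.mp (hA hz))).mpr rfl⟩

lemma norm_blaschkeProduct_le_one (hA : A ⊆ ball 0 1) (hz : z ∈ ball 0 1) :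
    ‖blaschkeProduct A z‖ ≤ 1 :=
  norm_tprod_le_one fun a ↦
    norm_blaschkeFactor_le_one (mem_ball_zero_iff.mp (hA a.2)) (mem_ball_zero_iff.mp hz)

variable (hA : A ⊆ ball 0 1) (hS : Summable fun a : A ↦ 1 - ‖(a : ℂ)‖)
include hA hS

lemma hasProdLocallyUniformlyOn_blaschkeProduct :
    HasProdLocallyUniformlyOn (fun a : A ↦ blaschkeFactor a) (blaschkeProduct A) (ball 0 1) := by
  refine hasProdLocallyUniformlyOn_of_forall_compact isOpen_ball fun K hK hKc ↦ ?_
  obtain ⟨ρ, hρ, hKρ⟩ := exists_lt_subset_ball hKc.isClosed hK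
  have hbound : ∀ a : A, ∀ z ∈ K,
      ‖blaschkeFactor a z - 1‖ ≤ (1 + ρ) / (1 - ρ) * (1 - ‖(a : ℂ)‖) := by
    intro a z hz
    have ha := mem_ball_zero_iff.mp (hA a.2)
    have hzρ := mem_ball_zero_iff.mp (hKρ hz)
    have ha' : 0 ≤ 1 - ‖(a : ℂ)‖ := sub_nonneg.mpr ha.le
    have hρ' : 0 < 1 - ρ := sub_pos.mpr hρ
    calc ‖blaschkeFactor a z - 1‖ ≤ (1 + ‖z‖) / (1 - ‖z‖) * (1 - ‖(a : ℂ)‖) :=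
          norm_blaschkeFactor_sub_one_le ha (hzρ.trans hρ)
      _ ≤ (1 + ρ) / (1 - ρ) * (1 - ‖(a : ℂ)‖) := by
          have hρ₀ : 0 ≤ 1 + ρ := by linarith [norm_nonneg z]
          gcongr
  have hprod := Summable.hasProdUniformlyOn_one_add hKc (hS.mul_left ((1 + ρ) / (1 - ρ)))
    (Eventually.of_forall hbound) fun a ↦
      ((differentiableOn_blaschkeFactor (mem_ball_zero_iff.mp (hA a.2))).continuousOn.mono
        hK).sub continuousOn_const
  simp only [add_sub_cancel] at hprod
  exact hprod

lemma differentiableOn_blaschkeProduct : DifferentiableOn ℂ (blaschkeProduct A) (ball 0 1) :=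
  (hasProdLocallyUniformlyOn_blaschkeProduct hA hS).differentiableOn
    (Eventually.of_forall fun _ ↦ DifferentiableOn.fun_finsetProd fun (a : A) _ ↦
      differentiableOn_blaschkeFactor (mem_ball_zero_iff.mp (hA a.2))) isOpen_ball

lemma blaschkeProduct_ne_zero (hz : z ∈ ball 0 1) (hzA : z ∉ A) : blaschkeProduct A z ≠ 0 := by
  have hz1 := mem_ball_zero_iff.mp hz
  have hsum : Summable fun a : A ↦ ‖blaschkeFactor a z - 1‖ :=
    (hS.mul_left _).of_nonneg_of_le (fun _ ↦ norm_nonneg _) fun a ↦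
      norm_blaschkeFactor_sub_one_le (mem_ball_zero_iff.mp (hA a.2)) hz1
  have hfactor : ∀ a : A, 1 + (blaschkeFactor a z - 1) ≠ 0 := fun a ↦ by
    rw [add_sub_cancel, Ne, blaschkeFactor_eq_zero_iff (mem_ball_zero_iff.mp (hA a.2)) hz1]
    exact fun h ↦ hzA (h ▸ a.2)
  have hprod := tprod_one_add_ne_zero_of_summable hfactor hsum
  simp only [add_sub_cancel] at hprod
  exact hprod

end BlaschkeProduct

lemma Summable.countable_of_pos {ι : Type*} {f : ι → ℝ} (hf : Summable f) (hpos : ∀ i, 0 < f i) :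
    Countable ι := by
  have hsupp := hf.countable_support
  rw [Function.support_eq_univ fun i ↦ (hpos i).ne', countable_univ_iff] at hsupp
  exact hsupp

theorem stmt_3 (A : Set ℂ) (hA : A ⊆ ball (0 : ℂ) 1)
    (hdom : ∀ Φ : ℂ → ℂ, BddHolo Φ (ball (0 : ℂ) 1) →
      sSup ((fun z => ‖Φ z‖) '' A)
        = sSup ((fun z => ‖Φ z‖) '' ball (0 : ℂ) 1)) :
    ¬ Summable (fun a : A => 1 - ‖(a : ℂ)‖) := by
  intro hS
  have hAc : A.Countable := countable_coe_iff.mp <|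
    hS.countable_of_pos fun a ↦ sub_pos.mpr (mem_ball_zero_iff.mp (hA a.2))
  obtain ⟨z₀, hz₀, hz₀A⟩ :=
    (hAc.dense_compl ℂ).inter_open_nonempty _ isOpen_ball ⟨0, mem_ball_self one_pos⟩
  set B := blaschkeProduct A
  have hB : ∀ z ∈ ball (0 : ℂ) 1, ‖B z‖ ≤ 1 := fun z hz ↦ norm_blaschkeProduct_le_one hA hz
  have hsup := hdom B ⟨differentiableOn_blaschkeProduct hA hS, 1, hB⟩
  have hsupA : sSup ((fun z ↦ ‖B z‖) '' A) ≤ 0 := Real.sSup_nonpos <| by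
    rintro _ ⟨a, ha, rfl⟩
    exact (norm_eq_zero.mpr (blaschkeProduct_eq_zero_of_mem hA ha)).le
  have hsupBall : ‖B z₀‖ ≤ sSup ((fun z ↦ ‖B z‖) '' ball 0 1) :=
    le_csSup ⟨1, by rintro _ ⟨z, hz, rfl⟩; exact hB z hz⟩ ⟨z₀, hz₀, rfl⟩
  have hBz₀ : 0 < ‖B z₀‖ := norm_pos_iff.mpr (blaschkeProduct_ne_zero hA hS hz₀ hz₀A)
  linarith
end

section
/- Let H be a complex Hilbert space (inner product ⟨·,·⟩ conjugate-linear in the second argument), X a set, b : X → H a map with ‖b(x)‖ < 1 for all x ∈ X, and ξ ∈ H with ‖ξ‖ = 1. Then for every n ∈ ℕ and all points x₁, …, xₙ ∈ X, the n × n complex matrix M with entries M_{ij} = (1 − ⟨b(x_i), ξ⟩ · conj(⟨b(x_j), ξ⟩)) / (1 − ⟨b(x_i), b(x_j)⟩) is positive semidefinite. (The denominators are nonzero since |⟨b(x_i), b(x_j)⟩| ≤ ‖b(x_i)‖‖b(x_j)‖ < 1.) -/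
/-!
With `t i j = ⟨b(x_i), b(x_j)⟩` and `s i = ⟨b(x_i), ξ⟩`, the matrix is
`1 + (t - s s*) / (1 - t)` entrywise. Since `‖ξ‖ = 1`, the numerator `t - s s*` is the Gram
matrix of the components of the `b(x_i)` orthogonal to `ξ`, and `1 / (1 - t) = ∑ₖ tᵏ` is a
convergent series of Hadamard powers of the Gram matrix `t`. By the Schur product theorem every
term `(t - s s*) ⊙ t^⊙k` is positive semidefinite, hence so is the sum, the positive semidefinite
matrices being a closed cone; adding the all-ones matrix keeps it positive semidefinite.
-/

open Complex Matrix ComplexOrder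

/-- The inner product with the paper's convention: linear in the first argument
and conjugate-linear in the second argument (Mathlib's `inner` is conjugate-linear
in the *first* argument, so we swap). -/
noncomputable def innerPaper {H : Type*} [NormedAddCommGroup H] [InnerProductSpace ℂ H]
    (u v : H) : ℂ := inner ℂ v u

namespace Matrix

variable {n 𝕜 : Type*} [RCLike 𝕜] [Fintype n]

theorem posSemidef_of_one : (of 1 : Matrix n n 𝕜).PosSemidef := by
  convert posSemidef_vecMulVec_self_star (1 : n → 𝕜)
  ext
  simp [vecMulVec]

theorem PosSemidef.hadamard_pow {T : Matrix n n 𝕜} (hT : T.PosSemidef) (k : ℕ) :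
    (of fun i j => T i j ^ k).PosSemidef := by
  induction k with
  | zero => simp only [pow_zero]; exact posSemidef_of_one
  | succ k ih =>
    convert hT.hadamard ih using 1
    ext i j
    simp [pow_succ']

theorem isClosed_setOf_posSemidef : IsClosed {A : Matrix n n 𝕜 | A.PosSemidef} := by
  simp_rw [posSemidef_iff_dotProduct_mulVec, Set.ofPred_and, Set.ofPred_forall]
  exact (isClosed_eq continuous_id.matrix_conjTranspose continuous_id).inter <|
    isClosed_iInter fun x => isClosed_le continuous_const <|
      continuous_const.dotProduct (continuous_id.matrix_mulVec continuous_const)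

theorem PosSemidef.of_hasSum {ι : Type*} {A : ι → Matrix n n 𝕜} {B : Matrix n n 𝕜}
    (hA : ∀ k, (A k).PosSemidef) (h : HasSum A B) : B.PosSemidef :=
  isClosed_setOf_posSemidef.mem_of_tendsto h <|
    Filter.Eventually.of_forall fun s => posSemidef_sum s fun k _ => hA k

theorem PosSemidef.hadamard_div_one_sub {G T : Matrix n n 𝕜} (hG : G.PosSemidef)
    (hT : T.PosSemidef) (hT_lt : ∀ i j, ‖T i j‖ < 1) :
    (of fun i j => G i j / (1 - T i j)).PosSemidef := by
  refine .of_hasSum (fun k => hG.hadamard (hT.hadamard_pow k)) ?_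
  refine Pi.hasSum.mpr fun i => Pi.hasSum.mpr fun j => ?_
  simpa [div_eq_mul_inv] using (hasSum_geometric_of_norm_lt_one (hT_lt i j)).mul_left (G i j)

end Matrix

section

variable {𝕜 E : Type*} [RCLike 𝕜] [NormedAddCommGroup E] [InnerProductSpace 𝕜 E]

local notation "⟪" x ", " y "⟫" => inner 𝕜 x y

theorem inner_sub_inner_smul_sub_inner_smul {ξ : E} (hξ : ‖ξ‖ = 1) (v w : E) :
    ⟪v - ⟪ξ, v⟫ • ξ, w - ⟪ξ, w⟫ • ξ⟫ = ⟪v, w⟫ - ⟪v, ξ⟫ * ⟪ξ, w⟫ := by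
  have hξξ : ⟪ξ, ξ⟫ = 1 := by simp [inner_self_eq_norm_sq_to_K, hξ]
  simp only [inner_sub_left, inner_sub_right, inner_smul_left, inner_smul_right, hξξ,
    inner_conj_symm]
  ring

theorem norm_inner_lt_one {v w : E} (hv : ‖v‖ < 1) (hw : ‖w‖ < 1) : ‖⟪v, w⟫‖ < 1 :=
  (norm_inner_le_norm v w).trans_lt (mul_lt_one_of_nonneg_of_lt_one_left (norm_nonneg v) hv hw.le)

end

theorem stmt_4_general {H : Type*} [NormedAddCommGroup H] [InnerProductSpace ℂ H]
    {X : Type*} (b : X → H) (hb : ∀ x, ‖b x‖ < 1)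
    (ξ : H) (hξ : ‖ξ‖ = 1) (n : ℕ) (x : Fin n → X) :
    Matrix.PosSemidef (Matrix.of fun i j : Fin n =>
      (1 - innerPaper (b (x i)) ξ * (starRingEnd ℂ) (innerPaper (b (x j)) ξ)) /
        (1 - innerPaper (b (x i)) (b (x j)))) := by
  let v := fun i => b (x i)
  let u := fun i => v i - inner ℂ ξ (v i) • ξ
  have hv_lt : ∀ i j, ‖gram ℂ v i j‖ < 1 := fun i j => norm_inner_lt_one (hb _) (hb _)
  -- The paper's `⟨b(x_i), b(x_j)⟩` is Mathlib's `gram ℂ v j i`, hence the transpose.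
  have hM : (of fun i j : Fin n =>
      (1 - innerPaper (b (x i)) ξ * (starRingEnd ℂ) (innerPaper (b (x j)) ξ)) /
        (1 - innerPaper (b (x i)) (b (x j))))ᵀ =
      of 1 + of fun i j => gram ℂ u i j / (1 - gram ℂ v i j) := by
    ext i j
    have hne : 1 - gram ℂ v i j ≠ 0 := fun h =>
      (hv_lt i j).ne (by rw [← sub_eq_zero.mp h, norm_one])
    simp only [transpose_apply, of_apply, Matrix.add_apply, Pi.one_apply, innerPaper,
      inner_conj_symm, gram_apply, u, v, inner_sub_inner_smul_sub_inner_smul hξ] at hne ⊢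
    field_simp
    ring
  rw [← posSemidef_transpose_iff, hM]
  exact posSemidef_of_one.add <|
    (posSemidef_gram ℂ u).hadamard_div_one_sub (posSemidef_gram ℂ v) hv_lt

theorem stmt_4 {H : Type*} [NormedAddCommGroup H] [InnerProductSpace ℂ H]
    [CompleteSpace H] {X : Type*} (b : X → H) (hb : ∀ x, ‖b x‖ < 1)
    (ξ : H) (hξ : ‖ξ‖ = 1) (n : ℕ) (x : Fin n → X) :
    Matrix.PosSemidef (Matrix.of fun i j : Fin n =>
      (1 - innerPaper (b (x i)) ξ * (starRingEnd ℂ) (innerPaper (b (x j)) ξ)) /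
        (1 - innerPaper (b (x i)) (b (x j)))) :=
  stmt_4_general b hb ξ hξ n x
end

section
/- Let U ⊆ ℂ be a nonempty connected open set and let E ⊆ U be relatively closed in U with U \ E nonempty. Suppose every bounded holomorphic function on U \ E admits a holomorphic extension to U. Then for every compact set K ⊆ E, every bounded holomorphic function f on U \ K agrees on U \ K with (the restriction of) a bounded holomorphic function on U; that is, there exists F holomorphic and bounded on U with F(z) = f(z) for all z ∈ U \ K. -/
/-!
A set `E` with nonempty interior does not have the extension property: if a disc around `z₀`
lies in `E`, then `z ↦ (z - z₀)⁻¹` is bounded holomorphic on `U \ E`, and an extension `F` to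
`U` would make `(z - z₀) F z - 1` vanish on `U` by the identity theorem, which fails at `z₀`.
So `U \ E` is dense in `U`. Given `f` bounded holomorphic on `U \ K`, its restriction to `U \ E`
extends to `F` on `U`; by density and continuity `F = f` on `U \ K`, and `F` is bounded on `U`
because it is bounded by `f` off `K` and continuous on the compact set `K`.
-/

open Complex Set

lemma BddHolo.mono {f : ℂ → ℂ} {Ω Ω' : Set ℂ} (hf : BddHolo f Ω) (h : Ω' ⊆ Ω) :
    BddHolo f Ω' :=
  ⟨hf.1.mono h, hf.2.imp fun _ hM z hz => hM z (h hz)⟩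

lemma bddHolo_inv_sub {Ω : Set ℂ} {z₀ : ℂ} {ε : ℝ} (hε : 0 < ε)
    (hΩ : Disjoint Ω (Metric.ball z₀ ε)) : BddHolo (fun z => (z - z₀)⁻¹) Ω := by
  have hfar : ∀ z ∈ Ω, ε ≤ ‖z - z₀‖ := fun z hz => by
    simpa [Complex.dist_eq] using Set.disjoint_left.mp hΩ hz
  refine ⟨DifferentiableOn.inv (by fun_prop) fun z hz h0 => ?_, ε⁻¹, fun z hz => ?_⟩
  · have := hfar z hz
    rw [h0, norm_zero] at this
    linarith
  · rw [norm_inv]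
    exact inv_anti₀ hε (hfar z hz)

lemma not_eqOn_inv_sub_of_differentiableOn {U V : Set ℂ} {F : ℂ → ℂ} {z₀ : ℂ}
    (hU : IsOpen U) (hUc : IsPreconnected U) (hz₀ : z₀ ∈ U) (hV : IsOpen V) (hVU : V ⊆ U)
    (hVne : V.Nonempty) (hz₀V : z₀ ∉ V) (hF : DifferentiableOn ℂ F U) :
    ¬ EqOn F (fun z => (z - z₀)⁻¹) V := by
  intro hFV
  obtain ⟨z₁, hz₁⟩ := hVne
  have hanalytic : AnalyticOnNhd ℂ (fun z => (z - z₀) * F z - 1) U :=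
    DifferentiableOn.analyticOnNhd (by fun_prop) hU
  have hzero : (fun z => (z - z₀) * F z - 1) =ᶠ[nhds z₁] 0 := by
    filter_upwards [hV.mem_nhds hz₁] with w hw
    have hw₀ : w - z₀ ≠ 0 := sub_ne_zero.mpr fun h => hz₀V (h ▸ hw)
    simp [hFV hw, hw₀]
  simpa using hanalytic.eqOn_zero_of_preconnected_of_eventuallyEq_zero hUc (hVU hz₁) hzero hz₀

lemma interior_eq_empty_of_forall_bddHolo_extends {U E : Set ℂ} (hU : IsOpen U)
    (hUc : IsPreconnected U) (hEU : E ⊆ U) (hUE : IsOpen (U \ E)) (hne : (U \ E).Nonempty)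
    (hext : ∀ f : ℂ → ℂ, BddHolo f (U \ E) →
      ∃ F : ℂ → ℂ, DifferentiableOn ℂ F U ∧ ∀ z ∈ U \ E, F z = f z) :
    interior E = ∅ := by
  by_contra h
  obtain ⟨z₀, hz₀⟩ := nonempty_iff_ne_empty.mpr h
  obtain ⟨ε, hε, hball⟩ := Metric.mem_nhds_iff.mp (mem_interior_iff_mem_nhds.mp hz₀)
  have hdisj : Disjoint (U \ E) (Metric.ball z₀ ε) :=
    Set.disjoint_left.mpr fun _ hz hzball => hz.2 (hball hzball)
  obtain ⟨F, hF, hFeq⟩ := hext _ (bddHolo_inv_sub hε hdisj)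
  have hz₀E : z₀ ∈ E := interior_subset hz₀
  exact not_eqOn_inv_sub_of_differentiableOn hU hUc (hEU hz₀E) hUE sdiff_subset hne
    (fun h => h.2 hz₀E) hF hFeq

lemma bddHolo_of_eqOn_diff_of_isCompact {F f : ℂ → ℂ} {U K : Set ℂ}
    (hF : DifferentiableOn ℂ F U) (hK : IsCompact K) (hKU : K ⊆ U) (hf : BddHolo f (U \ K))
    (hFf : EqOn F f (U \ K)) : BddHolo F U := by
  obtain ⟨M, hM⟩ := hf.2
  obtain ⟨C, hC⟩ := hK.exists_bound_of_continuousOn (hF.continuousOn.mono hKU)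
  refine ⟨hF, max M C, fun z hz => ?_⟩
  by_cases hzK : z ∈ K
  · exact (hC z hzK).trans (le_max_right _ _)
  · rw [hFf ⟨hz, hzK⟩]
    exact (hM z ⟨hz, hzK⟩).trans (le_max_left _ _)

theorem stmt_14_general (U E : Set ℂ) (hUopen : IsOpen U)
    (hUconn : IsConnected U) (hEU : E ⊆ U) (hrelclosed : IsOpen (U \ E))
    (hne : (U \ E).Nonempty)
    (hext : ∀ f : ℂ → ℂ, BddHolo f (U \ E) →
      ∃ F : ℂ → ℂ, DifferentiableOn ℂ F U ∧ ∀ z ∈ U \ E, F z = f z) :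
    ∀ K : Set ℂ, K ⊆ E → IsCompact K →
      ∀ f : ℂ → ℂ, BddHolo f (U \ K) →
        ∃ F : ℂ → ℂ, BddHolo F U ∧ ∀ z ∈ U \ K, F z = f z := by
  intro K hKE hK f hf
  have hEK : U \ E ⊆ U \ K := sdiff_subset_sdiff_right hKE
  obtain ⟨F, hF, hFf⟩ := hext f (hf.mono hEK)
  have hdense : U ⊆ closure (U \ E) := by
    have hint := interior_eq_empty_of_forall_bddHolo_extends hUopen hUconn.isPreconnected hEU
      hrelclosed hne hext
    simpa only [sdiff_eq] using
      (interior_eq_empty_iff_dense_compl.mp hint).open_subset_closure_inter hUopen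
  have heq : EqOn F f (U \ K) :=
    EqOn.of_subset_closure hFf (hF.mono sdiff_subset).continuousOn hf.1.continuousOn hEK
      (sdiff_subset.trans hdense)
  exact ⟨F, bddHolo_of_eqOn_diff_of_isCompact hF hK (hKE.trans hEU) hf heq, heq⟩

theorem stmt_14 (U E : Set ℂ) (hUopen : IsOpen U) (hUne : U.Nonempty)
    (hUconn : IsConnected U) (hEU : E ⊆ U) (hrelclosed : IsOpen (U \ E))
    (hne : (U \ E).Nonempty)
    (hext : ∀ f : ℂ → ℂ, BddHolo f (U \ E) →
      ∃ F : ℂ → ℂ, DifferentiableOn ℂ F U ∧ ∀ z ∈ U \ E, F z = f z) :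
    ∀ K : Set ℂ, K ⊆ E → IsCompact K →
      ∀ f : ℂ → ℂ, BddHolo f (U \ K) →
        ∃ F : ℂ → ℂ, BddHolo F U ∧ ∀ z ∈ U \ K, F z = f z :=
  stmt_14_general U E hUopen hUconn hEU hrelclosed hne hext
end
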